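/- For every integer d ≥ 4 and for m = 2d + 1 and m = 2d + 2, the covering functional of the d-dimensional crosspolytope satisfies γ_m^d(K^d) = (d−1)/d. -/

import Mathlib

open scoped BigOperators

/-- The `d`-dimensional crosspolytope: the unit ball of the ℓ¹-norm on ℝ^d. -/
def cross (d : ℕ) : Set (Fin d → ℝ) := {x | ∑ i, |x i| ≤ 1}

/-- The homCopy `λ • (cross d) + u` of the scaled crosspolytope. -/
def homCopy (d : ℕ) (lam : ℝ) (u : Fin d → ℝ) : Set (Fin d → ℝ) :=
  (fun x => lam • x + u) '' cross d

/-- `cross d` can be covered by `m` translates of `lam • cross d`. -/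
def Covers (d m : ℕ) (lam : ℝ) : Prop :=
  ∃ u : Fin m → (Fin d → ℝ), cross d ⊆ ⋃ i, homCopy d lam (u i)

/-- The vertices `±e₁, …, ±e_d` of the crosspolytope. -/
def crossVertices (d : ℕ) : Set (Fin d → ℝ) :=
  {v | ∃ i : Fin d, v = Pi.single i (1 : ℝ) ∨ v = -Pi.single i (1 : ℝ)}

/-- The facet centers `(ε₁/d, …, ε_d/d)`, `ε ∈ {−1,1}^d`, of the crosspolytope. -/
def facetCenters (d : ℕ) : Set (Fin d → ℝ) :=
  {c | ∃ ε : Fin d → ℝ, (∀ i, ε i = 1 ∨ ε i = -1) ∧ c = fun i => ε i / d}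

/- ### Auxiliary lemmas -/

lemma mem_homCopy {d : ℕ} {lam : ℝ} (hl : 0 < lam) (u x : Fin d → ℝ) :
    x ∈ homCopy d lam u ↔ ∑ i, |x i - u i| ≤ lam := by
  constructor
  · rintro ⟨y, hy, rfl⟩
    have : ∀ i, |lam • y i + u i - u i| = lam * |y i| := by
      intro i
      simp [smul_eq_mul, abs_mul, abs_of_pos hl]
    calc ∑ i, |(lam • y + u) i - u i| = ∑ i, lam * |y i| := by
          refine Finset.sum_congr rfl fun i _ => ?_
          simpa using this i
      _ = lam * ∑ i, |y i| := by rw [Finset.mul_sum]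
      _ ≤ lam * 1 := by
          exact mul_le_mul_of_nonneg_left hy hl.le
      _ = lam := mul_one lam
  · intro h
    refine ⟨lam⁻¹ • (x - u), ?_, ?_⟩
    · show ∑ i, |(lam⁻¹ • (x - u)) i| ≤ 1
      have : ∀ i, |(lam⁻¹ • (x - u)) i| = lam⁻¹ * |x i - u i| := by
        intro i; simp [smul_eq_mul, abs_mul, abs_of_pos (inv_pos.2 hl)]
      rw [Finset.sum_congr rfl fun i _ => this i, ← Finset.mul_sum]
      rw [inv_mul_le_iff₀ hl, mul_one]
      exact h
    · funext i
      simp [smul_eq_mul]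
      field_simp
      ring

lemma abs_add_le_of_mul_nonpos {A S B : ℝ} (h : A * S ≤ 0) (hA : |A| ≤ B) (hS : |S| ≤ B) :
    |A + S| ≤ B := by
  rw [abs_le] at *
  rcases le_total A 0 with h1 | h1 <;> rcases le_total S 0 with h2 | h2 <;>
    constructor <;> nlinarith

lemma signsum {d : ℕ} (t : Fin d → ℝ) (B : ℝ) (hB : 0 ≤ B) (ht : ∀ i, |t i| ≤ B) :
    ∃ ε : Fin d → ℝ, (∀ i, ε i = 1 ∨ ε i = -1) ∧ |∑ i, ε i * t i| ≤ B := by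
  suffices h : ∀ s : Finset (Fin d), ∃ ε : Fin d → ℝ,
      (∀ i, ε i = 1 ∨ ε i = -1) ∧ |∑ i ∈ s, ε i * t i| ≤ B by
    simpa using h Finset.univ
  intro s
  induction s using Finset.induction_on with
  | empty => exact ⟨fun _ => 1, fun _ => Or.inl rfl, by simpa using hB⟩
  | @insert a s ha ih =>
    obtain ⟨ε, hε, hsum⟩ := ih
    set S := ∑ i ∈ s, ε i * t i with hS
    set c : ℝ := if 0 ≤ S * t a then -1 else 1 with hc
    refine ⟨Function.update ε a c, ?_, ?_⟩
    · intro i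
      rcases eq_or_ne i a with rfl | hi
      · simp only [Function.update_self, hc]
        split_ifs <;> simp
      · simpa [Function.update_of_ne hi] using hε i
    · rw [Finset.sum_insert ha]
      have h1 : ∑ i ∈ s, Function.update ε a c i * t i = S := by
        refine Finset.sum_congr rfl fun i hi => ?_
        rw [Function.update_of_ne (by rintro rfl; exact ha hi)]
      rw [h1, Function.update_self]
      have hca : |c * t a| ≤ B := by
        have : |c| = 1 := by rw [hc]; split_ifs <;> simp
        rw [abs_mul, this, one_mul]; exact ht a
      refine abs_add_le_of_mul_nonpos ?_ hca hsum
      rw [hc]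
      split_ifs with h
      · nlinarith
      · nlinarith [le_of_not_ge h]

lemma farpair {d : ℕ} (hd : 4 ≤ d) (w : Fin d → ℝ) :
    ∃ ε : Fin d → ℝ, (∀ i, ε i = 1 ∨ ε i = -1) ∧
      ((d : ℝ) - 1) / d ≤ ∑ i, |ε i / d - w i| ∧
      ((d : ℝ) - 1) / d ≤ ∑ i, |(-ε i) / d - w i| := by
  have hd0 : (0 : ℝ) < d := by positivity
  set t : Fin d → ℝ := fun i => |1 / (d : ℝ) - w i| - |1 / d + w i| with htdef
  have ht : ∀ i, |t i| ≤ 2 / d := by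
    intro i
    have h1 := abs_sub_abs_le_abs_sub (1 / (d : ℝ) - w i) (-(1 / d + w i))
    have h2 := abs_sub_abs_le_abs_sub (-(1 / (d:ℝ) + w i)) (1 / d - w i)
    rw [abs_neg] at h1 h2
    have e1 : |1/(d:ℝ) - w i - -(1/d + w i)| = 2/d := by
      rw [show 1/(d:ℝ) - w i - -(1/d + w i) = 2/d by ring, abs_of_pos (by positivity)]
    have e2 : |-(1/(d:ℝ) + w i) - (1/d - w i)| = 2/d := by
      rw [show -(1/(d:ℝ) + w i) - (1/d - w i) = -(2/d) by ring, abs_neg,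
        abs_of_pos (by positivity)]
    rw [e1] at h1; rw [e2] at h2
    rw [abs_sub_le_iff]
    exact ⟨h1, h2⟩
  obtain ⟨ε, hε, hsum⟩ := signsum t (2 / d) (by positivity) ht
  refine ⟨ε, hε, ?_⟩
  have habs : ∀ i, |ε i| = 1 := fun i => by rcases hε i with h | h <;> simp [h]
  have hdiff : ∑ i, |ε i / (d:ℝ) - w i| - ∑ i, |(-ε i) / d - w i| = ∑ i, ε i * t i := by
    rw [← Finset.sum_sub_distrib]
    refine Finset.sum_congr rfl fun i _ => ?_
    rcases hε i with h | h
    · rw [h, one_mul]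
      show |1/(d:ℝ) - w i| - |(-1)/(d:ℝ) - w i| = |1/(d:ℝ) - w i| - |1/(d:ℝ) + w i|
      rw [show (-1)/(d:ℝ) - w i = -(1/(d:ℝ) + w i) by ring, abs_neg]
    · rw [h]
      show |(-1)/(d:ℝ) - w i| - |(-(-1))/(d:ℝ) - w i|
          = (-1) * (|1/(d:ℝ) - w i| - |1/(d:ℝ) + w i|)
      rw [show (-1)/(d:ℝ) - w i = -(1/(d:ℝ) + w i) by ring, abs_neg,
          show (-(-1))/(d:ℝ) - w i = 1/(d:ℝ) - w i by ring]
      ring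
  have hsumge : 2 ≤ ∑ i, |ε i / (d:ℝ) - w i| + ∑ i, |(-ε i) / d - w i| := by
    rw [← Finset.sum_add_distrib]
    have hterm : ∀ i ∈ Finset.univ, 2 / (d:ℝ) ≤ |ε i / d - w i| + |(-ε i) / d - w i| := by
      intro i _
      have h1 : |(ε i / (d:ℝ) - w i) + ((-ε i)/d - w i)*(-1)| ≤
          |ε i / d - w i| + |(-ε i)/d - w i| := by
        calc |(ε i / (d:ℝ) - w i) + ((-ε i)/d - w i)*(-1)|
            ≤ |ε i / d - w i| + |((-ε i)/d - w i)*(-1)| := abs_add_le _ _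
          _ = _ := by rw [abs_mul]; simp
      have h2 : (ε i / (d:ℝ) - w i) + ((-ε i)/d - w i)*(-1) = 2 * ε i / d := by ring
      rw [h2] at h1
      have h3 : |2 * ε i / (d:ℝ)| = 2 / d := by
        rw [abs_div, abs_mul, habs i]; simp [abs_of_pos hd0]
      linarith [h3 ▸ h1]
    have h4 := Finset.sum_le_sum hterm
    have hcard : ∑ _i : Fin d, 2 / (d:ℝ) = 2 := by
      rw [Finset.sum_const]
      simp only [Finset.card_univ, Fintype.card_fin, nsmul_eq_mul]
      field_simp
    linarith [hcard ▸ h4]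
  rw [abs_le] at hsum
  have hmul : 2 / (d:ℝ) * d = 2 := by field_simp
  constructor <;>
    (rw [div_le_iff₀ hd0];
     nlinarith [mul_le_mul_of_nonneg_right hsum.1 hd0.le,
       mul_le_mul_of_nonneg_right hsum.2 hd0.le,
       mul_le_mul_of_nonneg_right hsumge hd0.le, hdiff, hmul])

/-- the 2d vertices -/
def vtx (d : ℕ) (p : Fin d × Bool) : Fin d → ℝ :=
  fun j => if j = p.1 then (if p.2 then 1 else -1) else 0

lemma vtx_abs (d : ℕ) (p : Fin d × Bool) (j : Fin d) :
    |vtx d p j| = if j = p.1 then 1 else 0 := by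
  unfold vtx; split_ifs <;> simp

lemma vtx_mem (d : ℕ) (p : Fin d × Bool) : vtx d p ∈ cross d := by
  show ∑ j, |vtx d p j| ≤ 1
  rw [Finset.sum_congr rfl fun j _ => vtx_abs d p j]
  simp

lemma same_copy {d : ℕ} {μ : ℝ} {w x y : Fin d → ℝ}
    (hx : ∑ i, |x i - w i| ≤ μ) (hy : ∑ i, |y i - w i| ≤ μ) :
    ∑ i, |x i - y i| ≤ 2 * μ := by
  have h : ∀ i ∈ Finset.univ, |x i - y i| ≤ |x i - w i| + |y i - w i| := by
    intro i _
    calc |x i - y i| = |(x i - w i) - (y i - w i)| := by ring_nf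
      _ ≤ |x i - w i| + |y i - w i| := abs_sub _ _
  calc ∑ i, |x i - y i| ≤ ∑ i, (|x i - w i| + |y i - w i|) := Finset.sum_le_sum h
    _ = (∑ i, |x i - w i|) + ∑ i, |y i - w i| := Finset.sum_add_distrib
    _ ≤ 2 * μ := by linarith

lemma vtx_dist {d : ℕ} {p q : Fin d × Bool} (hpq : p ≠ q) :
    2 ≤ ∑ j, |vtx d p j - vtx d q j| := by
  rcases eq_or_ne p.1 q.1 with h1 | h1
  · have h2 : p.2 ≠ q.2 := by
      intro h2; exact hpq (Prod.ext h1 h2)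
    have key : |vtx d p p.1 - vtx d q p.1| = 2 := by
      unfold vtx
      simp only [if_pos rfl, h1, if_pos rfl]
      cases hp : p.2 <;> cases hq : q.2 <;> simp_all <;> norm_num
    calc (2:ℝ) = |vtx d p p.1 - vtx d q p.1| := key.symm
      _ ≤ ∑ j, |vtx d p j - vtx d q j| :=
          Finset.single_le_sum (f := fun j => |vtx d p j - vtx d q j|)
            (fun j _ => abs_nonneg _) (Finset.mem_univ p.1)
  · have hsub : ({p.1, q.1} : Finset (Fin d)) ⊆ Finset.univ := Finset.subset_univ _
    have hpair : ∑ j ∈ ({p.1, q.1} : Finset (Fin d)), |vtx d p j - vtx d q j| = 2 := by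
      rw [Finset.sum_pair h1]
      unfold vtx
      simp only [if_pos rfl, if_neg h1, if_neg (Ne.symm h1)]
      cases p.2 <;> cases q.2 <;> norm_num
    calc (2:ℝ) = _ := hpair.symm
      _ ≤ ∑ j, |vtx d p j - vtx d q j| :=
          Finset.sum_le_sum_of_subset_of_nonneg hsub (fun j _ _ => abs_nonneg _)

lemma ctr_mem {d : ℕ} (hd : 0 < d) {ε : Fin d → ℝ} (hε : ∀ i, ε i = 1 ∨ ε i = -1) :
    (fun i => ε i / (d:ℝ)) ∈ cross d := by
  have hd0 : (0:ℝ) < d := by exact_mod_cast hd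
  show ∑ i, |ε i / (d:ℝ)| ≤ 1
  have h : ∀ i ∈ Finset.univ, |ε i / (d:ℝ)| = 1 / d := by
    intro i _
    rw [abs_div, abs_of_pos hd0]
    rcases hε i with h | h <;> simp [h]
  rw [Finset.sum_congr rfl h, Finset.sum_const]
  simp only [Finset.card_univ, Fintype.card_fin, nsmul_eq_mul]
  rw [mul_one_div]
  exact le_of_eq (div_self hd0.ne')

lemma ctr_antipodal {d : ℕ} (hd : 0 < d) {ε : Fin d → ℝ} (hε : ∀ i, ε i = 1 ∨ ε i = -1) :
    2 ≤ ∑ i, |ε i / (d:ℝ) - (-ε i) / d| := by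
  have hd0 : (0:ℝ) < d := by exact_mod_cast hd
  have h : ∀ i ∈ Finset.univ, |ε i / (d:ℝ) - (-ε i) / d| = 2 / d := by
    intro i _
    rw [show ε i / (d:ℝ) - (-ε i) / d = 2 * ε i / d by ring, abs_div, abs_mul,
      abs_of_pos hd0]
    rcases hε i with h | h <;> simp [h]
  rw [Finset.sum_congr rfl h, Finset.sum_const]
  simp only [Finset.card_univ, Fintype.card_fin, nsmul_eq_mul]
  rw [mul_div_assoc']
  exact le_of_eq (by field_simp)

lemma vtx_ctr_dist {d : ℕ} (hd : 4 ≤ d) (p : Fin d × Bool) {ε : Fin d → ℝ}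
    (hε : ∀ i, ε i = 1 ∨ ε i = -1) :
    2 * (((d:ℝ) - 1) / d) ≤ ∑ j, |vtx d p j - ε j / d| := by
  have hd0 : (0:ℝ) < d := by
    have : (4:ℝ) ≤ d := by exact_mod_cast hd
    linarith
  have hterm : ∀ j ∈ Finset.univ,
      (if j = p.1 then 1 - 1/(d:ℝ) else 1/d) ≤ |vtx d p j - ε j / d| := by
    intro j _
    have hεj : |ε j| = 1 := by rcases hε j with h | h <;> simp [h]
    have hεd : |ε j / (d:ℝ)| = 1 / d := by rw [abs_div, hεj, abs_of_pos hd0]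
    split_ifs with h
    · have h1 : |vtx d p j| = 1 := by rw [vtx_abs, if_pos h]
      have h2 := abs_sub_abs_le_abs_sub (vtx d p j) (ε j / d)
      rw [h1, hεd] at h2
      linarith
    · have h0 : vtx d p j = 0 := by unfold vtx; rw [if_neg h]
      rw [h0, zero_sub, abs_neg, hεd]
  have hsum : ∑ j, (if j = p.1 then 1 - 1/(d:ℝ) else 1/d) = 2 * (((d:ℝ) - 1) / d) := by
    have e1 : ∀ j : Fin d, (if j = p.1 then 1 - 1/(d:ℝ) else 1/d)
        = 1/(d:ℝ) + (if j = p.1 then 1 - 2/(d:ℝ) else 0) := by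
      intro j; split_ifs <;> ring
    rw [Finset.sum_congr rfl fun j _ => e1 j, Finset.sum_add_distrib,
      Finset.sum_ite_eq' Finset.univ p.1 (fun _ => 1 - 2/(d:ℝ)), Finset.sum_const]
    simp only [Finset.card_univ, Fintype.card_fin, nsmul_eq_mul, Finset.mem_univ, if_pos]
    field_simp
    ring
  calc 2 * (((d:ℝ) - 1) / d) = _ := hsum.symm
    _ ≤ _ := Finset.sum_le_sum hterm

/-- the translate centers used for the upper bound -/
noncomputable def ubc (d m : ℕ) : Fin m → (Fin d → ℝ) := fun k j =>
  if (k:ℕ) < d then (if (j:ℕ) = (k:ℕ) then 1/(d:ℝ) else 0)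
  else if (k:ℕ) < 2*d then (if (j:ℕ) = (k:ℕ) - d then -(1/(d:ℝ)) else 0)
  else 0

lemma ubc_pos {d m : ℕ} (k : Fin m) (i : Fin d) (hk : (k:ℕ) = (i:ℕ)) (j : Fin d) :
    ubc d m k j = if j = i then 1/(d:ℝ) else 0 := by
  unfold ubc
  rw [if_pos (show (k:ℕ) < d by rw [hk]; exact i.isLt), hk]
  simp [Fin.ext_iff]

lemma ubc_neg {d m : ℕ} (k : Fin m) (i : Fin d) (hk : (k:ℕ) = d + (i:ℕ)) (j : Fin d) :
    ubc d m k j = if j = i then -(1/(d:ℝ)) else 0 := by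
  have hi := i.isLt
  unfold ubc
  rw [if_neg (show ¬(k:ℕ) < d by omega), if_pos (show (k:ℕ) < 2*d by omega),
    show (k:ℕ) - d = (i:ℕ) by omega]
  simp [Fin.ext_iff]

lemma covers_ub {d m : ℕ} (hd : 4 ≤ d) (hm : 2*d ≤ m) :
    Covers d m (((d:ℝ) - 1) / d) := by
  have hd4 : (4:ℝ) ≤ d := by exact_mod_cast hd
  have hd0 : (0:ℝ) < d := by linarith
  have hl : 0 < ((d:ℝ) - 1) / d := div_pos (by linarith) hd0
  refine ⟨ubc d m, fun x hx => ?_⟩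
  have hs : ∑ i, |x i| ≤ 1 := hx
  have : Nonempty (Fin d) := ⟨⟨0, by omega⟩⟩
  obtain ⟨i, hi⟩ := Finite.exists_max (fun j => |x j|)
  set t := |x i| with htdef
  have ht0 : 0 ≤ t := abs_nonneg _
  have hdt : ∑ j, |x j| ≤ d * t := by
    calc ∑ j, |x j| ≤ ∑ _j : Fin d, t := Finset.sum_le_sum fun j _ => hi j
      _ = d * t := by rw [Finset.sum_const]; simp [Finset.card_univ]
  have hinv : 1/(d:ℝ) * d = 1 := by field_simp
  -- choose the index
  rcases le_or_gt 0 (x i) with hsign | hsign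
  · -- positive side : index i
    refine Set.mem_iUnion.2 ⟨⟨(i:ℕ), by omega⟩, ?_⟩
    rw [mem_homCopy hl]
    have hc : ∀ j : Fin d, ubc d m ⟨(i:ℕ), by omega⟩ j
        = if j = i then 1/(d:ℝ) else 0 := fun j => ubc_pos _ i rfl j
    rw [Finset.sum_congr rfl fun j _ => by rw [hc j]]
    have hsplit : ∑ j, |x j - if j = i then 1/(d:ℝ) else 0|
        = |x i - 1/(d:ℝ)| + ∑ j ∈ Finset.univ.erase i, |x j| := by
      rw [← Finset.add_sum_erase Finset.univ _ (Finset.mem_univ i), if_pos rfl]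
      congr 1
      refine Finset.sum_congr rfl fun j hj => ?_
      rw [if_neg (Finset.ne_of_mem_erase hj), sub_zero]
    rw [hsplit]
    have herase : ∑ j ∈ Finset.univ.erase i, |x j| = (∑ j, |x j|) - t := by
      rw [← Finset.add_sum_erase Finset.univ (fun j => |x j|) (Finset.mem_univ i)]
      rw [htdef]; ring
    rw [herase]
    have hxi : x i = t := by rw [htdef, abs_of_nonneg hsign]
    rw [hxi, le_div_iff₀ hd0]
    rcases abs_cases (t - 1/(d:ℝ)) with ⟨he, _⟩ | ⟨he, _⟩ <;> rw [he] <;> nlinarith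
  · -- negative side : index d + i
    refine Set.mem_iUnion.2 ⟨⟨d + (i:ℕ), by omega⟩, ?_⟩
    rw [mem_homCopy hl]
    have hc : ∀ j : Fin d, ubc d m ⟨d + (i:ℕ), by omega⟩ j
        = if j = i then -(1/(d:ℝ)) else 0 := fun j => ubc_neg _ i rfl j
    rw [Finset.sum_congr rfl fun j _ => by rw [hc j]]
    have hsplit : ∑ j, |x j - if j = i then -(1/(d:ℝ)) else 0|
        = |x i + 1/(d:ℝ)| + ∑ j ∈ Finset.univ.erase i, |x j| := by
      rw [← Finset.add_sum_erase Finset.univ _ (Finset.mem_univ i), if_pos rfl,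
        sub_neg_eq_add]
      congr 1
      refine Finset.sum_congr rfl fun j hj => ?_
      rw [if_neg (Finset.ne_of_mem_erase hj), sub_zero]
    rw [hsplit]
    have herase : ∑ j ∈ Finset.univ.erase i, |x j| = (∑ j, |x j|) - t := by
      rw [← Finset.add_sum_erase Finset.univ (fun j => |x j|) (Finset.mem_univ i)]
      rw [htdef]; ring
    rw [herase]
    have hxi : x i = -t := by rw [htdef, abs_of_neg hsign]; ring
    have heq : |x i + 1/(d:ℝ)| = |t - 1/(d:ℝ)| := by
      rw [hxi, show -t + 1/(d:ℝ) = -(t - 1/(d:ℝ)) by ring, abs_neg]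
    rw [heq, le_div_iff₀ hd0]
    rcases abs_cases (t - 1/(d:ℝ)) with ⟨he, _⟩ | ⟨he, _⟩ <;> rw [he] <;> nlinarith

theorem stmt_7 (d : ℕ) (hd : 4 ≤ d) (m : ℕ) (hm : m = 2 * d + 1 ∨ m = 2 * d + 2) :
    Covers d m (((d : ℝ) - 1) / d) ∧
    ∀ μ : ℝ, 0 < μ → μ < ((d : ℝ) - 1) / d → ¬ Covers d m μ := by
  have hd4 : (4:ℝ) ≤ d := by exact_mod_cast hd
  have hd0 : (0:ℝ) < d := by linarith
  constructor
  · exact covers_ub hd (by omega)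
  · rintro μ hμ0 hμlt ⟨u, hsub⟩
    have hμ1 : 2 * μ < 2 := by
      have : ((d:ℝ) - 1) / d < 1 := by rw [div_lt_one hd0]; linarith
      linarith
    have hmem : ∀ x ∈ cross d, ∃ k : Fin m, ∑ i, |x i - u k i| ≤ μ := by
      intro x hx
      obtain ⟨k, hk⟩ := Set.mem_iUnion.1 (hsub hx)
      exact ⟨k, (mem_homCopy hμ0 _ _).1 hk⟩
    -- assign a translate to each vertex
    have hv : ∀ p : Fin d × Bool, ∃ k : Fin m, ∑ i, |vtx d p i - u k i| ≤ μ :=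
      fun p => hmem _ (vtx_mem d p)
    choose F hF using hv
    have hFinj : Function.Injective F := by
      intro p q hpq
      by_contra hne
      have h1 := same_copy (hF p) (hpq ▸ hF q)
      have h2 := vtx_dist (d := d) hne
      linarith
    set T : Finset (Fin m) := Finset.univ \ Finset.univ.image F with hT
    have hTcard : T.card = m - 2*d := by
      rw [hT, Finset.card_sdiff_of_subset (Finset.subset_univ _), Finset.card_univ,
        Finset.card_image_of_injective _ hFinj, Finset.card_univ]
      simp [Fintype.card_prod]
      omega
    -- each facet center lies in a translate not containing any vertex
    have hctr : ∀ ε : Fin d → ℝ, (∀ i, ε i = 1 ∨ ε i = -1) →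
        ∃ k ∈ T, ∑ i, |ε i / (d:ℝ) - u k i| ≤ μ := by
      intro ε hε
      obtain ⟨k, hk⟩ := hmem (fun i => ε i / (d:ℝ)) (ctr_mem (by omega) hε)
      have hk' : ∑ i, |ε i / (d:ℝ) - u k i| ≤ μ := hk
      refine ⟨k, ?_, hk'⟩
      rw [hT, Finset.mem_sdiff]
      refine ⟨Finset.mem_univ _, ?_⟩
      intro hmemim
      obtain ⟨p, _, hp⟩ := Finset.mem_image.1 hmemim
      have h1 := same_copy (hp ▸ hF p) hk'
      have h2 := vtx_ctr_dist hd p hε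
      have : 2 * μ < 2 * (((d:ℝ) - 1)/d) := by linarith
      linarith
    -- antipodal centers lie in distinct translates
    have hdistinct : ∀ (ε : Fin d → ℝ), (∀ i, ε i = 1 ∨ ε i = -1) →
        ∀ k k' : Fin m, (∑ i, |ε i / (d:ℝ) - u k i| ≤ μ) →
        (∑ i, |(-ε i) / (d:ℝ) - u k' i| ≤ μ) → k ≠ k' := by
      intro ε hε k k' h1 h2 hkk
      have h3 := same_copy h1 (hkk ▸ h2)
      have h4 := ctr_antipodal (d := d) (by omega) hε
      linarith
    have hnegsign : ∀ (ε : Fin d → ℝ), (∀ i, ε i = 1 ∨ ε i = -1) →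
        (∀ i, -ε i = 1 ∨ -ε i = (-1:ℝ)) := by
      intro ε hε i
      rcases hε i with h | h <;> simp [h]
    -- the two translates containing the constant-sign centers
    obtain ⟨k₁, hk₁T, hk₁⟩ := hctr (fun _ => 1) (fun _ => Or.inl rfl)
    obtain ⟨k₂, hk₂T, hk₂⟩ := hctr (fun _ => -1) (fun _ => Or.inr rfl)
    have hk₂' : ∑ i, |(-(fun _ : Fin d => (1:ℝ)) i) / (d:ℝ) - u k₂ i| ≤ μ := by
      calc ∑ i, |(-(fun _ : Fin d => (1:ℝ)) i) / (d:ℝ) - u k₂ i|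
          = ∑ i, |(fun _ : Fin d => (-1:ℝ)) i / (d:ℝ) - u k₂ i| := by
            refine Finset.sum_congr rfl fun i _ => ?_; norm_num
        _ ≤ μ := hk₂
    have hk12 : k₁ ≠ k₂ :=
      hdistinct (fun _ => 1) (fun _ => Or.inl rfl) k₁ k₂ hk₁ hk₂'
    have hpairsub : ({k₁, k₂} : Finset (Fin m)) ⊆ T := by
      intro k hk
      rcases Finset.mem_insert.1 hk with rfl | hk
      · exact hk₁T
      · rw [Finset.mem_singleton.1 hk]; exact hk₂T
    have hpaircard : ({k₁, k₂} : Finset (Fin m)).card = 2 := Finset.card_pair hk12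
    rcases hm with rfl | rfl
    · -- m = 2d+1 : only one spare translate, contradiction
      have h2le := Finset.card_le_card hpairsub
      rw [hpaircard] at h2le
      omega
    · -- m = 2d+2 : exactly two spare translates
      have hT2 : T.card = 2 := by omega
      have hTeq : T = {k₁, k₂} :=
        (Finset.eq_of_subset_of_card_le hpairsub (by omega)).symm
      obtain ⟨ε, hε, hfar1, hfar2⟩ := farpair hd (u k₁)
      obtain ⟨a, haT, ha⟩ := hctr ε hε
      obtain ⟨b, hbT, hb⟩ := hctr (fun i => -ε i) (hnegsign ε hε)
      have hb' : ∑ i, |(-ε i) / (d:ℝ) - u b i| ≤ μ := hb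
      have hab : a ≠ b := hdistinct ε hε a b ha hb'
      rw [hTeq] at haT hbT
      rcases Finset.mem_insert.1 haT with rfl | haT'
      · linarith
      · have hbk : b = k₁ := by
          rcases Finset.mem_insert.1 hbT with rfl | hbT'
          · rfl
          · exact absurd ((Finset.mem_singleton.1 haT').trans
              (Finset.mem_singleton.1 hbT').symm) hab
        rw [hbk] at hb'
        linarith
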